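/- If C′ is a minimum vertex cover and S′ a minimum simultaneous dominating set of a connected graph G, then |C′| ≤ 2|S′| − 1. -/

import Mathlib

open SimpleGraph

variable {V : Type*}

/-- Number of connected components of a graph. -/
noncomputable def numComponents (G : SimpleGraph V) : ℕ := Nat.card G.ConnectedComponent

/-- A vertex is a cut vertex if its removal increases the number of connected components. -/
def IsCutVertex (G : SimpleGraph V) (v : V) : Prop :=
  numComponents G < numComponents (G.induce {u | u ≠ v})

/-- `T` is a spanning tree of `G`: a subgraph on all vertices of `G` that is a tree. -/
def IsSpanningTree (G T : SimpleGraph V) : Prop := T ≤ G ∧ T.IsTree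

/-- `v` is dominated by `S` in the graph `T`. -/
def DominatedIn (T : SimpleGraph V) (S : Set V) (v : V) : Prop :=
  v ∈ S ∨ ∃ u ∈ S, T.Adj v u

/-- `v` is simultaneously dominated by `S`: dominated in every spanning tree of `G`. -/
def SimDominated (G : SimpleGraph V) (S : Set V) (v : V) : Prop :=
  ∀ T : SimpleGraph V, IsSpanningTree G T → DominatedIn T S v

/-- `S` is a simultaneous dominating set of `G`. -/
def IsSDSet (G : SimpleGraph V) (S : Set V) : Prop := ∀ v, SimDominated G S v

/-- `C` is a vertex cover of `G`. -/
def IsVertexCover (G : SimpleGraph V) (C : Set V) : Prop :=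
  ∀ ⦃u v : V⦄, G.Adj u v → u ∈ C ∨ v ∈ C

/-- A block of `G`: a maximal vertex set inducing a connected subgraph without cut vertices. -/
def IsBlock (G : SimpleGraph V) (B : Set V) : Prop :=
  B.Nonempty ∧ (G.induce B).Connected ∧ (∀ x, ¬ IsCutVertex (G.induce B) x) ∧
    ∀ B' : Set V, B ⊆ B' → (G.induce B').Connected →
      (∀ x, ¬ IsCutVertex (G.induce B') x) → B' = B

/-- 2-connected: connected, at least 3 vertices, no cut vertex. -/
def TwoConnected (G : SimpleGraph V) [Fintype V] : Prop :=
  G.Connected ∧ 3 ≤ Fintype.card V ∧ ∀ v, ¬ IsCutVertex G v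

/-- Colours 1, 0, 0̂. -/
inductive Col : Type
  | one | zero | zhat
deriving DecidableEq

/-- `S` is an `f`-respecting simultaneous dominating set of `G`. -/
def RespSDS (G : SimpleGraph V) (f : V → Col) (S : Set V) : Prop :=
  (∀ v, f v = Col.one → v ∈ S) ∧ ∀ v, f v = Col.zhat → SimDominated G S v

/-- A minimum `f`-respecting simultaneous dominating set. -/
def MinRespSDS (G : SimpleGraph V) (f : V → Col) (S : Set V) : Prop :=
  RespSDS G f S ∧ ∀ S' : Set V, RespSDS G f S' → S.ncard ≤ S'.ncard

/-!
If `S` dominates a vertex `v ∉ S` in every spanning tree of `G`, then deleting the edges from `v`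
to `S` disconnects `G`: otherwise a spanning tree of the remaining graph would not dominate `v`.
Call such a `v` cut-dominated. Since `S` together with a cover of the edges between cut-dominated
vertices is a vertex cover, it suffices to cover those edges by `|S| - 1` vertices. Given such an
edge `uw`, let `K` be the set of vertices still reachable from `u` once the edges from `u` to `S`
are deleted. Only edges from `u` to `S` leave `K`, so `K` and `Kᶜ ∪ {u}` induce connected graphs
meeting only in `u`, both sides contain a vertex of `S`, and cut-domination of the vertices other
than `u` passes to the side containing them. Induction on the number of vertices covers each side
with one vertex fewer than it has of `S`, and `u` covers the rest.
-/

namespace SimpleGraph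

variable {G : SimpleGraph V} {S : Set V}

def edgesTo (S : Set V) (v : V) : Set (Sym2 V) := {e | ∃ s ∈ S, e = s(v, s)}

lemma deleteEdges_edgesTo_adj {v a b : V} :
    (G.deleteEdges (edgesTo S v)).Adj a b ↔ G.Adj a b ∧ ¬ (a = v ∧ b ∈ S ∨ b = v ∧ a ∈ S) := by
  simp only [deleteEdges_adj, edgesTo, Set.mem_ofPred_eq, Sym2.eq_iff]
  constructor
  · rintro ⟨hab, hne⟩
    refine ⟨hab, ?_⟩
    rintro (⟨rfl, hb⟩ | ⟨rfl, ha⟩)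
    · exact hne ⟨b, hb, Or.inl ⟨rfl, rfl⟩⟩
    · exact hne ⟨a, ha, Or.inr ⟨rfl, rfl⟩⟩
  · rintro ⟨hab, hne⟩
    refine ⟨hab, ?_⟩
    rintro ⟨s, hs, ⟨rfl, rfl⟩ | ⟨rfl, rfl⟩⟩
    · exact hne (Or.inl ⟨rfl, hs⟩)
    · exact hne (Or.inr ⟨rfl, hs⟩)

def IsCutDominated (G : SimpleGraph V) (S : Set V) (v : V) : Prop :=
  v ∉ S ∧ ¬ (G.deleteEdges (edgesTo S v)).Connected

def CoversCutDominated (G : SimpleGraph V) (S C : Set V) : Prop :=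
  ∀ ⦃a b⦄, G.Adj a b → IsCutDominated G S a → IsCutDominated G S b → a ∈ C ∨ b ∈ C

lemma IsCutDominated.nonempty (hG : G.Connected) {v : V} (hv : IsCutDominated G S v) :
    S.Nonempty := by
  rw [Set.nonempty_iff_ne_empty]
  rintro rfl
  exact hv.2 (by simpa [edgesTo] using hG)

lemma reachable_induce_of_walk {A : Set V} {u : V} (hu : u ∈ A)
    (hA : ∀ x ∈ A, x ≠ u → ∀ y, G.Adj x y → y ∈ A) {z : V} (p : G.Walk z u) (hz : z ∈ A) :
    (G.induce A).Reachable ⟨z, hz⟩ ⟨u, hu⟩ := by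
  induction p with
  | nil => rfl
  | @cons x y u hxy p ih =>
    by_cases hxu : x = u
    · subst hxu; rfl
    · have hy := hA x hz hxu y hxy
      exact (Adj.reachable (show (G.induce A).Adj ⟨x, hz⟩ ⟨y, hy⟩ from hxy)).trans (ih hu hA hy)

lemma Preconnected.induce_of_forall_adj_mem (hG : G.Preconnected) {A : Set V} {u : V}
    (hu : u ∈ A) (hA : ∀ x ∈ A, x ≠ u → ∀ y, G.Adj x y → y ∈ A) :
    (G.induce A).Connected := by
  have : Nonempty A := ⟨⟨u, hu⟩⟩
  refine (connected_iff_exists_forall_reachable _).2 ⟨⟨u, hu⟩, fun ⟨z, hz⟩ => ?_⟩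
  obtain ⟨p⟩ := hG z u
  exact (reachable_induce_of_walk hu hA p hz).symm

def nearSide (G : SimpleGraph V) (S : Set V) (u : V) : Set V :=
  {z | (G.deleteEdges (edgesTo S u)).Reachable u z}

lemma eq_and_mem_of_adj_nearSide {u a b : V} (ha : a ∈ nearSide G S u)
    (hb : b ∉ nearSide G S u) (hab : G.Adj a b) : a = u ∧ b ∈ S := by
  by_contra hne
  refine hb (ha.trans (Adj.reachable (deleteEdges_edgesTo_adj.mpr ⟨hab, ?_⟩)))
  rintro (h | ⟨rfl, -⟩)
  · exact hne h
  · exact hb (Reachable.refl _)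

lemma connected_induce_nearSide (hG : G.Preconnected) (u : V) :
    (G.induce (nearSide G S u)).Connected :=
  hG.induce_of_forall_adj_mem (Reachable.refl u) fun _ hx hxu _ hxy => by
    by_contra hy
    exact hxu (eq_and_mem_of_adj_nearSide hx hy hxy).1

lemma mem_compl_nearSide_union_of_adj {u a b : V} (hab : G.Adj a b) (ha : a ∉ nearSide G S u) :
    b ∈ (nearSide G S u)ᶜ ∪ {u} := by
  by_cases hb : b ∈ nearSide G S u
  · exact Or.inr (eq_and_mem_of_adj_nearSide hb ha hab.symm).1
  · exact Or.inl hb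

lemma connected_induce_compl_nearSide (hG : G.Preconnected) (u : V) :
    (G.induce ((nearSide G S u)ᶜ ∪ {u})).Connected :=
  hG.induce_of_forall_adj_mem (Or.inr rfl) fun _ hx hxu _ hxy =>
    mem_compl_nearSide_union_of_adj hxy (hx.resolve_right hxu)

lemma IsCutDominated.exists_mem_compl_nearSide (hG : G.Preconnected) {u : V}
    (hu : IsCutDominated G S u) : ∃ s ∈ S, s ∉ nearSide G S u := by
  have : Nonempty V := ⟨u⟩
  obtain ⟨z, hz⟩ : ∃ z, z ∉ nearSide G S u := by
    by_contra! h
    exact hu.2 ((connected_iff_exists_forall_reachable _).2 ⟨u, h⟩)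
  obtain ⟨p⟩ := hG u z
  obtain ⟨d, -, hd, hd'⟩ := p.exists_boundary_dart _ (Reachable.refl u) hz
  exact ⟨d.snd, (eq_and_mem_of_adj_nearSide hd hd' d.adj).2, hd'⟩

lemma mem_nearSide_of_adj {u w : V} (huw : G.Adj u w) (hw : w ∉ S) : w ∈ nearSide G S u :=
  Adj.reachable (deleteEdges_edgesTo_adj.mpr ⟨huw, by rintro (⟨-, h⟩ | ⟨rfl, -⟩) <;> simp_all⟩)

lemma IsCutDominated.induce {A B : Set V} (hAB : Aᶜ ⊆ B) {u : V} (huA : u ∈ A) (huB : u ∈ B)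
    (hB : (G.induce B).Preconnected) {x : V} (hxA : x ∈ A) (hxB : x ∉ B)
    (hx : IsCutDominated G S x) :
    IsCutDominated (G.induce A) (Subtype.val ⁻¹' S) ⟨x, hxA⟩ := by
  refine ⟨hx.1, fun hconn => hx.2 ?_⟩
  let fA : (G.induce A).deleteEdges (edgesTo (Subtype.val ⁻¹' S) ⟨x, hxA⟩) →g
      G.deleteEdges (edgesTo S x) :=
    ⟨Subtype.val, fun hab => by
      rw [deleteEdges_edgesTo_adj] at hab ⊢
      simpa [Subtype.ext_iff] using hab⟩
  let fB : G.induce B →g G.deleteEdges (edgesTo S x) :=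
    ⟨Subtype.val, fun {a b} hab => deleteEdges_edgesTo_adj.mpr
      ⟨hab, by rintro (⟨rfl, -⟩ | ⟨rfl, -⟩) <;> simp_all⟩⟩
  have reach_of_mem : ∀ y (hy : y ∈ A), (G.deleteEdges (edgesTo S x)).Reachable x y :=
    fun y hy => (hconn.preconnected ⟨x, hxA⟩ ⟨y, hy⟩).map fA
  refine (connected_iff_exists_forall_reachable _).2 ⟨x, fun y => ?_⟩
  by_cases hy : y ∈ A
  · exact reach_of_mem y hy
  · exact (reach_of_mem u huA).trans ((hB ⟨u, huB⟩ ⟨y, hAB hy⟩).map fB)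

lemma CoversCutDominated.mem_image_val {A B : Set V} (hAB : Aᶜ ⊆ B) {u : V} (huA : u ∈ A)
    (huB : u ∈ B) (hB : (G.induce B).Preconnected) {C : Set A}
    (hC : CoversCutDominated (G.induce A) (Subtype.val ⁻¹' S) C) {a b : V} (hab : G.Adj a b)
    (haA : a ∈ A) (haB : a ∉ B) (hbA : b ∈ A) (hbB : b ∉ B)
    (ha : IsCutDominated G S a) (hb : IsCutDominated G S b) :
    a ∈ Subtype.val '' C ∨ b ∈ Subtype.val '' C :=
  (hC (a := ⟨a, haA⟩) (b := ⟨b, hbA⟩) hab (ha.induce hAB huA huB hB haA haB)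
    (hb.induce hAB huA huB hB hbA hbB)).imp (fun h => ⟨_, h, rfl⟩) (fun h => ⟨_, h, rfl⟩)

lemma CoversCutDominated.union_induce {A B : Set V} {u : V} (hAB : A ∪ B = Set.univ)
    (hAB' : A ∩ B = {u}) (hedge : ∀ a b, G.Adj a b → a ∉ B → b ∈ A)
    (hA : (G.induce A).Preconnected) (hB : (G.induce B).Preconnected) {CA : Set A} {CB : Set B}
    (hCA : CoversCutDominated (G.induce A) (Subtype.val ⁻¹' S) CA)
    (hCB : CoversCutDominated (G.induce B) (Subtype.val ⁻¹' S) CB) :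
    CoversCutDominated G S (Subtype.val '' CA ∪ Subtype.val '' CB ∪ {u}) := by
  have hAc : Aᶜ ⊆ B := fun x hx => (Set.eq_univ_iff_forall.1 hAB x).resolve_left hx
  have hBc : Bᶜ ⊆ A := Set.compl_subset_comm.1 hAc
  have hu : u ∈ A ∧ u ∈ B := (Set.ext_iff.1 hAB' u).2 rfl
  have eq_u : ∀ {x}, x ∈ A → x ∈ B → x = u := fun hxA hxB => (Set.ext_iff.1 hAB' _).1 ⟨hxA, hxB⟩
  intro a b hab ha hb
  by_cases hau : a = u
  · exact Or.inl (Or.inr hau)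
  by_cases hbu : b = u
  · exact Or.inr (Or.inr hbu)
  by_cases haB : a ∈ B
  · have haA : a ∉ A := fun haA => hau (eq_u haA haB)
    have hbB : b ∈ B := by_contra fun hbB => haA (hedge b a hab.symm hbB)
    have hbA : b ∉ A := fun hbA => hbu (eq_u hbA hbB)
    exact (hCB.mem_image_val hBc hu.2 hu.1 hA hab haB haA hbB hbA ha hb).imp
      (Or.inl ∘ Or.inr) (Or.inl ∘ Or.inr)
  · have hbA : b ∈ A := hedge a b hab haB
    have hbB : b ∉ B := fun hbB => hbu (eq_u hbA hbB)
    exact (hCA.mem_image_val hAc hu.1 hu.2 hB hab (hBc haB) haB hbA hbB ha hb).imp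
      (Or.inl ∘ Or.inl) (Or.inl ∘ Or.inl)

lemma ncard_preimage_val_add_ncard_preimage_val [Finite V] {A B : Set V} {u : V}
    (hAB : A ∪ B = Set.univ) (hAB' : A ∩ B = {u}) (huS : u ∉ S) :
    (Subtype.val ⁻¹' S : Set A).ncard + (Subtype.val ⁻¹' S : Set B).ncard = S.ncard := by
  rw [← Set.ncard_image_of_injective _ Subtype.val_injective, Subtype.image_preimage_coe,
    ← Set.ncard_image_of_injective _ Subtype.val_injective, Subtype.image_preimage_coe,
    ← Set.ncard_union_eq, ← Set.union_inter_distrib_right, hAB, Set.univ_inter]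
  rw [Set.disjoint_iff_inter_eq_empty, Set.inter_inter_inter_comm, hAB']
  simpa using huS

lemma exists_coversCutDominated_of_split [Finite V] {A B : Set V} {u : V}
    (hAB : A ∪ B = Set.univ) (hAB' : A ∩ B = {u}) (hedge : ∀ a b, G.Adj a b → a ∉ B → b ∈ A)
    (huS : u ∉ S) (hA : (G.induce A).Preconnected) (hB : (G.induce B).Preconnected)
    (hSA : (Subtype.val ⁻¹' S : Set A).Nonempty) (hSB : (Subtype.val ⁻¹' S : Set B).Nonempty)
    (hCA : ∃ C : Set A, C.ncard ≤ (Subtype.val ⁻¹' S : Set A).ncard - 1 ∧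
      CoversCutDominated (G.induce A) (Subtype.val ⁻¹' S) C)
    (hCB : ∃ C : Set B, C.ncard ≤ (Subtype.val ⁻¹' S : Set B).ncard - 1 ∧
      CoversCutDominated (G.induce B) (Subtype.val ⁻¹' S) C) :
    ∃ C : Set V, C.ncard ≤ S.ncard - 1 ∧ CoversCutDominated G S C := by
  obtain ⟨CA, hCAcard, hCA⟩ := hCA
  obtain ⟨CB, hCBcard, hCB⟩ := hCB
  refine ⟨_, ?_, hCA.union_induce hAB hAB' hedge hA hB hCB⟩
  have hSA' := (Set.ncard_pos (Set.toFinite _)).2 hSA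
  have hSB' := (Set.ncard_pos (Set.toFinite _)).2 hSB
  have hS := ncard_preimage_val_add_ncard_preimage_val hAB hAB' huS
  calc (Subtype.val '' CA ∪ Subtype.val '' CB ∪ {u}).ncard
      ≤ CA.ncard + CB.ncard + 1 := by
        grw [Set.ncard_union_le, Set.ncard_union_le, Set.ncard_singleton,
          Set.ncard_image_of_injective _ Subtype.val_injective,
          Set.ncard_image_of_injective _ Subtype.val_injective]
    _ ≤ S.ncard - 1 := by omega

theorem exists_coversCutDominated_ncard_le [Finite V] (hG : G.Connected) (S : Set V) :
    ∃ C : Set V, C.ncard ≤ S.ncard - 1 ∧ CoversCutDominated G S C := by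
  induction hn : Nat.card V using Nat.strong_induction_on generalizing V with
  | _ n ih =>
  by_cases hbad : ∃ u w, G.Adj u w ∧ IsCutDominated G S u ∧ IsCutDominated G S w
  swap
  · push Not at hbad
    exact ⟨∅, by simp, fun a b hab ha hb => (hbad a b hab ha hb).elim⟩
  obtain ⟨u, w, huw, hu, hw⟩ := hbad
  set K := nearSide G S u
  have huK : u ∈ K := Reachable.refl u
  have hwK : w ∈ K := mem_nearSide_of_adj huw hw.1
  have hwL : w ∉ Kᶜ ∪ {u} := by simp [hwK, huw.ne']
  obtain ⟨s, hsS, hsK⟩ := hu.exists_mem_compl_nearSide hG.preconnected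
  have hL := connected_induce_compl_nearSide (S := S) hG.preconnected u
  have hK := connected_induce_nearSide (S := S) hG.preconnected u
  have hwK' := hw.induce (B := Kᶜ ∪ {u}) Set.subset_union_left huK (Or.inr rfl) hL.preconnected
    hwK hwL
  exact exists_coversCutDominated_of_split
    (by rw [Set.union_right_comm, Set.compl_union_self, Set.univ_union])
    (by rw [Set.union_inter_distrib_right, Set.compl_inter_self, Set.empty_union,
      Set.singleton_inter_of_mem huK])
    (fun _ _ hab ha => mem_compl_nearSide_union_of_adj hab ha) hu.1 hL.preconnected
    hK.preconnected ⟨⟨s, Or.inl hsK⟩, hsS⟩ (hwK'.nonempty hK)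
    (ih _ (hn ▸ Finite.card_subtype_lt hwL) hL _ rfl)
    (ih _ (hn ▸ Finite.card_subtype_lt hsK) hK _ rfl)

end SimpleGraph

section

variable {G : SimpleGraph V} {S : Set V}

lemma SimDominated.isCutDominated {v : V} (hv : SimDominated G S v) (hvS : v ∉ S) :
    IsCutDominated G S v := by
  refine ⟨hvS, fun hconn => ?_⟩
  obtain ⟨T, hTle, hT⟩ := hconn.exists_isTree_le
  obtain hvS' | ⟨s, hs, hvs⟩ := hv T ⟨hTle.trans (deleteEdges_le _), hT⟩
  · exact hvS hvS'
  · exact (deleteEdges_edgesTo_adj.mp (hTle hvs)).2 (Or.inl ⟨rfl, hs⟩)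

lemma IsSDSet.isVertexCover_union {C : Set V} (hS : IsSDSet G S) (hC : CoversCutDominated G S C) :
    _root_.IsVertexCover G (S ∪ C) := by
  intro a b hab
  by_cases ha : a ∈ S
  · exact Or.inl (Or.inl ha)
  by_cases hb : b ∈ S
  · exact Or.inr (Or.inl hb)
  exact (hC hab ((hS a).isCutDominated ha) ((hS b).isCutDominated hb)).imp Or.inr Or.inr

end

theorem stmt6_general [Fintype V] (G : SimpleGraph V) (hG : G.Connected) (C' S' : Set V)
    (hCmin : ∀ C : Set V, _root_.IsVertexCover G C → C'.ncard ≤ C.ncard)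
    (hS : IsSDSet G S') :
    C'.ncard ≤ 2 * S'.ncard - 1 := by
  obtain ⟨C, hCcard, hC⟩ := exists_coversCutDominated_ncard_le hG S'
  calc C'.ncard ≤ (S' ∪ C).ncard := hCmin _ (hS.isVertexCover_union hC)
    _ ≤ S'.ncard + C.ncard := Set.ncard_union_le _ _
    _ ≤ 2 * S'.ncard - 1 := by omega

/-- A minimum vertex cover `C'` and a minimum SD-set `S'` of a connected graph
satisfy `|C'| ≤ 2|S'| - 1`. -/
theorem stmt6 [Fintype V] (G : SimpleGraph V) (hG : G.Connected) (C' S' : Set V)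
    (hC : _root_.IsVertexCover G C') (hCmin : ∀ C : Set V, _root_.IsVertexCover G C → C'.ncard ≤ C.ncard)
    (hS : IsSDSet G S') (hSmin : ∀ S : Set V, IsSDSet G S → S'.ncard ≤ S.ncard) :
    C'.ncard ≤ 2 * S'.ncard - 1 :=
  stmt6_general G hG C' S' hCmin hS
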